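/- arXiv:math/0607183 — 5 statements merged into one kernel-verified Lean document; each statement's English description precedes it below -/
import Mathlib

section
/- Let a, b ≥ 0 and c ≥ 1. Suppose the complex numbers α_1, …, α_{b+c} are pairwise distinct and set β_{a+c} := α_{b+c}. Then Φ_{a,b,c}(α_1,…,α_{b+c}; β_1,…,β_{a+c−1}, α_{b+c}; γ_1,…,γ_{a+b}) = (−1)^b · (∏_{k=1}^{a+b} (α_{b+c} − γ_k)) · Φ_{a,b,c−1}(α_1,…,α_{b+c−1}; β_1,…,β_{a+c−1}; γ_1,…,γ_{a+b}). (This is the key recurrence relation, Eq. (2.5) of the paper, with the sign fixed by the explicit definition of Φ.) -/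
/-!
Split the sum defining `Φ_{a,b,c}` according to whether the last index `L = b + c` lies in `I`.
If `L ∉ I`, the numerator contains the factor `α_L - β_{a+c} = 0`. If `L ∈ I`, write
`I = {L} ∪ J` with `J ⊆ {1, …, b + c - 1}`, `|J| = c - 1`: the numerator then contains
`∏ k (α_L - γ_k)` together with `∏_{i ∉ J} (α_i - α_L) = (-1)^b ∏_{i ∉ J} (α_L - α_i)`, and the
latter product, nonzero since the `α_i` are distinct, cancels against the same factor of the
denominator, leaving the `J`-term of `Φ_{a,b,c-1}`.
-/

/-- Eq. (2.6) of the paper: the explicit formula for the component of the O(1) loop model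
ground state corresponding to three series of nested arches of sizes `a`, `b`, `c`. -/
noncomputable def Phi (a b c : ℕ) (α : Fin (b + c) → ℂ) (β : Fin (a + c) → ℂ)
    (γ : Fin (a + b) → ℂ) : ℂ :=
  ∑ I ∈ Finset.powersetCard c (Finset.univ : Finset (Fin (b + c))),
    ((∏ i ∈ Iᶜ, ∏ j, (α i - β j)) * ∏ i ∈ I, ∏ k, (α i - γ k)) /
      ∏ i ∈ I, ∏ j ∈ Iᶜ, (α i - α j)

open Finset

lemma Fin.sum_powersetCard_succ_univ_of_last_notMem {M : Type*} [AddCommMonoid M] {n k : ℕ}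
    (f : Finset (Fin (n + 1)) → M) (hf : ∀ I, Fin.last n ∉ I → f I = 0) :
    ∑ I ∈ powersetCard (k + 1) univ, f I =
      ∑ J ∈ powersetCard k univ, f (insert (Fin.last n) (J.map Fin.castSuccEmb)) := by
  have hlast : Fin.last n ∉ univ.map Fin.castSuccEmb := by simp
  have hsub : ∀ I ∈ powersetCard (k + 1) (univ.map Fin.castSuccEmb), Fin.last n ∉ I :=
    fun I hI hmem => hlast ((mem_powersetCard.mp hI).1 hmem)
  rw [Fin.univ_castSuccEmb, cons_eq_insert, powersetCard_succ_insert hlast, sum_union,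
    sum_eq_zero fun I hI => hf I (hsub I hI), zero_add, sum_image, powersetCard_map, sum_map]
  · rfl
  · intro I hI J hJ h
    have hI' := (mem_powersetCard.mp (mem_coe.mp hI)).1
    have hJ' := (mem_powersetCard.mp (mem_coe.mp hJ)).1
    rw [← erase_insert (fun h => hlast (hI' h)), h, erase_insert (fun h => hlast (hJ' h))]
  · rw [disjoint_left]
    intro I hI hI'
    obtain ⟨J, -, rfl⟩ := mem_image.mp hI'
    exact hsub _ hI (mem_insert_self _ _)

lemma Fin.compl_insert_last_map_castSuccEmb {n : ℕ} (J : Finset (Fin n)) :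
    (insert (Fin.last n) (J.map Fin.castSuccEmb))ᶜ = Jᶜ.map Fin.castSuccEmb := by
  ext x
  cases x using Fin.lastCases <;> simp

section Summand

variable {K ι κ μ : Type*} [Field K] [Fintype ι] [DecidableEq ι] [Fintype κ] [Fintype μ]

noncomputable def phiSummand (α : ι → K) (β : κ → K) (γ : μ → K) (I : Finset ι) : K :=
  ((∏ i ∈ Iᶜ, ∏ j, (α i - β j)) * ∏ i ∈ I, ∏ k, (α i - γ k)) /
    ∏ i ∈ I, ∏ j ∈ Iᶜ, (α i - α j)

lemma Phi_eq_sum_phiSummand (a b c : ℕ) (α : Fin (b + c) → ℂ) (β : Fin (a + c) → ℂ)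
    (γ : Fin (a + b) → ℂ) :
    Phi a b c α β γ = ∑ I ∈ powersetCard c univ, phiSummand α β γ I := rfl

lemma phiSummand_eq_zero_of_notMem {α : ι → K} {β : κ → K} (γ : μ → K) {I : Finset ι}
    {i : ι} (hi : i ∉ I) {j : κ} (h : α i = β j) : phiSummand α β γ I = 0 := by
  have hzero : ∏ i ∈ Iᶜ, ∏ j, (α i - β j) = 0 :=
    prod_eq_zero (mem_compl.mpr hi) (prod_eq_zero (mem_univ j) (sub_eq_zero.mpr h))
  rw [phiSummand, hzero, zero_mul, zero_div]

lemma phiSummand_insert_last {n m : ℕ} (α : Fin (n + 1) → K) (β : Fin (m + 1) → K)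
    (γ : μ → K) (J : Finset (Fin n)) (hβ : β (Fin.last m) = α (Fin.last n))
    (hα : ∀ i ∉ J, α (Fin.last n) ≠ α i.castSucc) :
    phiSummand α β γ (insert (Fin.last n) (J.map Fin.castSuccEmb)) =
      (-1) ^ #Jᶜ * (∏ k, (α (Fin.last n) - γ k)) *
        phiSummand (fun i : Fin n => α i.castSucc) (fun j : Fin m => β j.castSucc) γ J := by
  set I := insert (Fin.last n) (J.map Fin.castSuccEmb)
  have hlast : Fin.last n ∉ J.map Fin.castSuccEmb := by simp
  have hIc : Iᶜ = Jᶜ.map Fin.castSuccEmb := Fin.compl_insert_last_map_castSuccEmb J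
  set P := ∏ i ∈ Jᶜ, (α (Fin.last n) - α i.castSucc)
  have hP : P ≠ 0 := prod_ne_zero_iff.mpr fun i hi => sub_ne_zero.mpr (hα i (mem_compl.mp hi))
  have hβfactor : ∏ i ∈ Iᶜ, ∏ j, (α i - β j) =
      (-1) ^ #Jᶜ * P * ∏ i ∈ Jᶜ, ∏ j : Fin m, (α i.castSucc - β j.castSucc) := by
    simp only [hIc, prod_map, Fin.castSuccEmb_apply, Fin.prod_univ_castSucc, hβ, P,
      ← prod_const, ← prod_mul_distrib]
    exact prod_congr rfl fun i _ => by ring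
  have hγfactor : ∏ i ∈ I, ∏ k, (α i - γ k) =
      (∏ k, (α (Fin.last n) - γ k)) * ∏ i ∈ J, ∏ k, (α i.castSucc - γ k) := by
    rw [prod_insert hlast, prod_map]
    rfl
  have hαfactor : ∏ i ∈ I, ∏ j ∈ Iᶜ, (α i - α j) =
      P * ∏ i ∈ J, ∏ j ∈ Jᶜ, (α i.castSucc - α j.castSucc) := by
    simp only [I, prod_insert hlast, hIc, prod_map, Fin.castSuccEmb_apply, P]
  rw [phiSummand, phiSummand, hβfactor, hγfactor, hαfactor, mul_assoc _ P, mul_mul_mul_comm,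
    mul_div_assoc, mul_assoc P, mul_div_mul_left _ _ hP]

end Summand

/-- The key recurrence relation (Eq. (2.5) of the paper, sign fixed by the explicit
definition of `Phi`): setting `β_{a+c} = α_{b+c}` reduces `Φ_{a,b,c}` to `Φ_{a,b,c-1}`.
Here the statement is given for `c + 1` in place of `c`, realizing the hypothesis `c ≥ 1`. -/
theorem razumov_stroganov_recurrence (a b c : ℕ)
    (α : Fin (b + (c + 1)) → ℂ) (β : Fin (a + (c + 1)) → ℂ) (γ : Fin (a + b) → ℂ)
    (hα : Function.Injective α)
    (hβ : β (Fin.last (a + c)) = α (Fin.last (b + c))) :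
    Phi a b (c + 1) α β γ =
      (-1) ^ b * (∏ k, (α (Fin.last (b + c)) - γ k)) *
        Phi a b c (fun i => α i.castSucc) (fun j => β j.castSucc) γ := by
  have hlast : ∀ i : Fin (b + c), α (Fin.last (b + c)) ≠ α i.castSucc :=
    fun i h => (Fin.castSucc_lt_last i).ne' (hα h)
  rw [Phi_eq_sum_phiSummand, Phi_eq_sum_phiSummand, mul_sum]
  refine (Fin.sum_powersetCard_succ_univ_of_last_notMem (n := b + c) _
    fun I hI => phiSummand_eq_zero_of_notMem γ hI hβ.symm).trans (sum_congr rfl fun J hJ => ?_)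
  refine (phiSummand_insert_last (n := b + c) (m := a + c) α β γ J hβ
    fun i _ => hlast i).trans ?_
  rw [card_compl, mem_powersetCard_univ.mp hJ, Fintype.card_fin, Nat.add_sub_cancel]
end

section
/- Let c ≥ 1 and let a_1, …, a_{c−1}, b_1, …, b_{c−1} be elements of a commutative ring. For ℓ = 1, …, c define the degree-(c−1) monic polynomial P_ℓ(z) = ∏_{i=1}^{ℓ−1} (z − a_i) · ∏_{j=1}^{c−ℓ} (z − b_j), and let M be the c × c matrix whose (ℓ, m) entry is the coefficient of z^{m−1} in P_ℓ. Then det M = ∏_{(i,j) : i, j ≥ 1, i + j ≤ c} (a_i − b_j). (Factor-exhaustion evaluation of det P used in Section 3 of the paper; the analogous evaluation of det Q follows by relabeling the sequences.) -/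
open Polynomial Finset Matrix

section aux

variable {S : Type*} [CommRing S]

/-- The coefficient matrix of the family `P_ℓ`. -/
noncomputable def coefMat (n : ℕ) (a b : Fin n → S) : Matrix (Fin (n+1)) (Fin (n+1)) S :=
  Matrix.of fun ℓ m : Fin (n+1) =>
    ((∏ i ∈ Finset.univ.filter (fun i : Fin n => i.1 < ℓ.1), (X - C (a i))) *
      ∏ j ∈ Finset.univ.filter (fun j : Fin n => j.1 < n - ℓ.1), (X - C (b j))).coeff m.1

/-- The polynomial `P_ℓ`. -/
noncomputable def polyP (n : ℕ) (a b : Fin n → S) (ℓ : Fin (n+1)) : S[X] :=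
  (∏ i ∈ Finset.univ.filter (fun i : Fin n => i.1 < ℓ.1), (X - C (a i))) *
    ∏ j ∈ Finset.univ.filter (fun j : Fin n => j.1 < n - ℓ.1), (X - C (b j))

lemma polyP_natDegree_le (n : ℕ) (a b : Fin n → S) (ℓ : Fin (n+1)) :
    (polyP n a b ℓ).natDegree ≤ n := by
  have h1 : (Finset.univ.filter (fun i : Fin n => i.1 < ℓ.1)).card ≤ ℓ.1 := by
    have := Finset.card_le_card_of_injOn (s := Finset.univ.filter (fun i : Fin n => i.1 < ℓ.1)) (t := Finset.range ℓ.1) (fun i : Fin n => i.1)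
      (fun i hi => Finset.mem_range.2 (Finset.mem_filter.1 hi).2)
      (fun i _ j _ h => Fin.ext h)
    simpa using this
  have h2 : (Finset.univ.filter (fun j : Fin n => j.1 < n - ℓ.1)).card ≤ n - ℓ.1 := by
    have := Finset.card_le_card_of_injOn (s := Finset.univ.filter (fun j : Fin n => j.1 < n - ℓ.1)) (t := Finset.range (n - ℓ.1)) (fun i : Fin n => i.1)
      (fun i hi => Finset.mem_range.2 (Finset.mem_filter.1 hi).2)
      (fun i _ j _ h => Fin.ext h)
    simpa using this
  have d1 : (∏ i ∈ Finset.univ.filter (fun i : Fin n => i.1 < ℓ.1),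
      (X - C (a i))).natDegree ≤ (Finset.univ.filter (fun i : Fin n => i.1 < ℓ.1)).card := by
    refine le_trans (Polynomial.natDegree_prod_le _ _) ?_
    refine le_trans (Finset.sum_le_sum fun i _ => Polynomial.natDegree_X_sub_C_le (a i)) ?_
    simp
  have d2 : (∏ j ∈ Finset.univ.filter (fun j : Fin n => j.1 < n - ℓ.1),
      (X - C (b j))).natDegree ≤ (Finset.univ.filter (fun j : Fin n => j.1 < n - ℓ.1)).card := by
    refine le_trans (Polynomial.natDegree_prod_le _ _) ?_
    refine le_trans (Finset.sum_le_sum fun j _ => Polynomial.natDegree_X_sub_C_le (b j)) ?_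
    simp
  have hl : ℓ.1 ≤ n := Fin.is_le ℓ
  calc (polyP n a b ℓ).natDegree ≤ _ + _ := Polynomial.natDegree_mul_le
    _ ≤ n := by omega

lemma key_mul (n : ℕ) (a b : Fin n → S) (t : S) :
    (coefMat n a b).det *
      (∏ i : Fin (n+1), ∏ j ∈ Finset.Ioi i, ((Fin.snoc a t : Fin (n+1) → S) j - (Fin.snoc a t : Fin (n+1) → S) i)) =
    (∏ i : Fin (n+1), ∏ j ∈ Finset.Ioi i, ((Fin.snoc a t : Fin (n+1) → S) j - (Fin.snoc a t : Fin (n+1) → S) i)) *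
      ∏ p ∈ Finset.univ.filter
        (fun p : Fin n × Fin n => p.1.1 + 1 + (p.2.1 + 1) ≤ n + 1), (a p.1 - b p.2) := by
  set x : Fin (n+1) → S := Fin.snoc a t with hx
  -- the evaluation matrix
  have hMV : coefMat n a b * (Matrix.vandermonde x)ᵀ =
      Matrix.of (fun ℓ m : Fin (n+1) => (polyP n a b ℓ).eval (x m)) := by
    ext ℓ m
    rw [Matrix.mul_apply]
    rw [Matrix.of_apply,
      Polynomial.eval_eq_sum_range' (lt_of_le_of_lt (polyP_natDegree_le n a b ℓ)
        (Nat.lt_succ_self n)) (x m), ← Fin.sum_univ_eq_sum_range]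
    refine Finset.sum_congr rfl fun k _ => rfl
  -- triangularity
  have htri : (Matrix.of (fun ℓ m : Fin (n+1) => (polyP n a b ℓ).eval (x m))).BlockTriangular id := by
    intro ℓ m hlt
    simp only [id] at hlt
    have hm : m.1 < n := lt_of_lt_of_le hlt (Fin.is_le ℓ)
    obtain ⟨m', rfl⟩ : ∃ m' : Fin n, m = Fin.castSucc m' := ⟨⟨m.1, hm⟩, by ext; rfl⟩
    have hmem : m' ∈ Finset.univ.filter (fun i : Fin n => i.1 < ℓ.1) := by
      simp only [Finset.mem_filter, Finset.mem_univ, true_and]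
      simpa [Fin.lt_def] using hlt
    have hzero : ((X : S[X]) - C (a m')).eval (x (Fin.castSucc m')) = 0 := by
      simp [hx]
    simp only [Matrix.of_apply, polyP, Polynomial.eval_mul, Polynomial.eval_prod]
    rw [Finset.prod_eq_zero hmem hzero, zero_mul]
  have hdet : (coefMat n a b).det * (Matrix.vandermonde x).det =
      ∏ ℓ : Fin (n+1), (polyP n a b ℓ).eval (x ℓ) := by
    rw [← Matrix.det_transpose (Matrix.vandermonde x), ← Matrix.det_mul, hMV,
      Matrix.det_of_upperTriangular htri]
    rfl
  rw [Matrix.det_vandermonde] at hdet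
  rw [hdet]
  -- now compute the diagonal product
  have hsplit : ∀ ℓ : Fin (n+1), (polyP n a b ℓ).eval (x ℓ) =
      (∏ i ∈ Finset.univ.filter (fun i : Fin n => i.1 < ℓ.1), (x ℓ - a i)) *
        ∏ j ∈ Finset.univ.filter (fun j : Fin n => j.1 < n - ℓ.1), (x ℓ - b j) := by
    intro ℓ
    simp [polyP, Polynomial.eval_prod]
  simp only [hsplit]
  rw [Finset.prod_mul_distrib]
  congr 1
  · -- Vandermonde part
    rw [Finset.prod_sigma' (Finset.univ : Finset (Fin (n+1)))
        (fun ℓ => Finset.univ.filter (fun i : Fin n => i.1 < ℓ.1)) (fun ℓ i => x ℓ - a i),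
      Finset.prod_sigma' (Finset.univ : Finset (Fin (n+1)))
        (fun i => Finset.Ioi i) (fun i j => x j - x i)]
    refine Finset.prod_bij'
      (fun p _ => (⟨Fin.castSucc p.2, p.1⟩ : Σ _ : Fin (n+1), Fin (n+1)))
      (fun p hp => (⟨p.2, ⟨p.1.1, by
        simp only [Finset.mem_sigma, Finset.mem_filter, Finset.mem_univ, true_and,
          Finset.mem_Ioi, Fin.lt_def] at hp
        have := Fin.is_le p.2
        omega⟩⟩ : Σ _ : Fin (n+1), Fin n))
      ?_ ?_ ?_ ?_ ?_
    · intro p hp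
      simp only [Finset.mem_sigma, Finset.mem_filter, Finset.mem_univ, true_and,
        Finset.mem_Ioi, Fin.lt_def, Fin.coe_castSucc] at hp ⊢
      omega
    · intro p hp
      simp only [Finset.mem_sigma, Finset.mem_filter, Finset.mem_univ, true_and,
        Finset.mem_Ioi, Fin.lt_def, Fin.coe_castSucc] at hp ⊢
      omega
    · intro p hp; rfl
    · intro p hp
      ext <;> simp
    · intro p hp
      simp [hx]
  · -- the main product
    rw [Finset.prod_sigma' (Finset.univ : Finset (Fin (n+1)))
        (fun ℓ => Finset.univ.filter (fun j : Fin n => j.1 < n - ℓ.1)) (fun ℓ j => x ℓ - b j)]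
    refine Finset.prod_bij'
      (fun p hp => ((⟨p.1.1, by
        simp only [Finset.mem_sigma, Finset.mem_filter, Finset.mem_univ, true_and] at hp
        omega⟩, p.2) : Fin n × Fin n))
      (fun p _ => (⟨Fin.castSucc p.1, p.2⟩ : Σ _ : Fin (n+1), Fin n))
      ?_ ?_ ?_ ?_ ?_
    · intro p hp
      simp only [Finset.mem_sigma, Finset.mem_filter, Finset.mem_univ, true_and] at hp ⊢
      omega
    · intro p hp
      simp only [Finset.mem_sigma, Finset.mem_filter, Finset.mem_univ, true_and,
        Fin.coe_castSucc] at hp ⊢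
      omega
    · intro p hp
      ext <;> simp
    · intro p hp; rfl
    · intro p hp
      simp only [Finset.mem_sigma, Finset.mem_filter, Finset.mem_univ, true_and] at hp
      have hlt : p.1.1 < n := by omega
      have hxp : x p.1 = a ⟨p.1.1, hlt⟩ := by
        have h1 : p.1 = Fin.castSucc ⟨p.1.1, hlt⟩ := by ext; rfl
        rw [hx]
        conv_lhs => rw [h1]
        exact Fin.snoc_castSucc (α := fun _ => S) t a _
      rw [hxp]

lemma key_domain {S : Type*} [CommRing S] [IsDomain S] (n : ℕ) (a b : Fin n → S) (t : S)
    (hinj : Function.Injective (Fin.snoc a t : Fin (n+1) → S)) :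
    (coefMat n a b).det =
      ∏ p ∈ Finset.univ.filter
        (fun p : Fin n × Fin n => p.1.1 + 1 + (p.2.1 + 1) ≤ n + 1), (a p.1 - b p.2) := by
  have h := key_mul n a b t
  have hV : (∏ i : Fin (n+1), ∏ j ∈ Finset.Ioi i,
      ((Fin.snoc a t : Fin (n+1) → S) j - (Fin.snoc a t : Fin (n+1) → S) i)) ≠ 0 := by
    refine Finset.prod_ne_zero_iff.2 fun i _ => Finset.prod_ne_zero_iff.2 fun j hj => ?_
    rw [Finset.mem_Ioi] at hj
    exact sub_ne_zero.2 (fun hEq => absurd (hinj hEq) (ne_of_gt hj))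
  rw [mul_comm (∏ i : Fin (n+1), ∏ j ∈ Finset.Ioi i, ((Fin.snoc a t : Fin (n+1) → S) j - (Fin.snoc a t : Fin (n+1) → S) i))] at h
  exact mul_right_cancel₀ hV h

lemma key_generic {R : Type*} [CommRing R] (n : ℕ) (a b : Fin n → R) :
    (coefMat n a b).det =
      ∏ p ∈ Finset.univ.filter
        (fun p : Fin n × Fin n => p.1.1 + 1 + (p.2.1 + 1) ≤ n + 1), (a p.1 - b p.2) := by
  classical
  let A : Fin n → MvPolynomial (Fin n ⊕ (Fin n ⊕ Unit)) ℤ := fun i => MvPolynomial.X (Sum.inl i)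
  let B : Fin n → MvPolynomial (Fin n ⊕ (Fin n ⊕ Unit)) ℤ :=
    fun j => MvPolynomial.X (Sum.inr (Sum.inl j))
  let T : MvPolynomial (Fin n ⊕ (Fin n ⊕ Unit)) ℤ := MvPolynomial.X (Sum.inr (Sum.inr ()))
  have hXinj : Function.Injective
      (MvPolynomial.X : (Fin n ⊕ (Fin n ⊕ Unit)) → MvPolynomial (Fin n ⊕ (Fin n ⊕ Unit)) ℤ) :=
    MvPolynomial.X_injective
  have hinj : Function.Injective
      (Fin.snoc A T : Fin (n+1) → MvPolynomial (Fin n ⊕ (Fin n ⊕ Unit)) ℤ) := by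
    intro u v huv
    induction u using Fin.lastCases with
    | last =>
      induction v using Fin.lastCases with
      | last => rfl
      | cast v =>
        simp only [Fin.snoc_last, Fin.snoc_castSucc] at huv
        exact absurd (hXinj huv) (by simp)
    | cast u =>
      induction v using Fin.lastCases with
      | last =>
        simp only [Fin.snoc_last, Fin.snoc_castSucc] at huv
        exact absurd (hXinj huv) (by simp)
      | cast v =>
        simp only [Fin.snoc_castSucc] at huv
        exact congrArg Fin.castSucc (Sum.inl_injective (hXinj huv))
  have h₀ := key_domain n A B T hinj
  let f : (Fin n ⊕ (Fin n ⊕ Unit)) → R := Sum.elim a (Sum.elim b (fun _ => 0))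
  let φ : MvPolynomial (Fin n ⊕ (Fin n ⊕ Unit)) ℤ →+* R := (MvPolynomial.aeval f).toRingHom
  have hφA : ∀ i, φ (A i) = a i := fun i => by
    simp only [φ, A, f, AlgHom.toRingHom_eq_coe, RingHom.coe_coe, MvPolynomial.aeval_X,
      Sum.elim_inl]
  have hφB : ∀ j, φ (B j) = b j := fun j => by
    simp only [φ, B, f, AlgHom.toRingHom_eq_coe, RingHom.coe_coe, MvPolynomial.aeval_X,
      Sum.elim_inr, Sum.elim_inl]
  have hmap : (coefMat n A B).map φ = coefMat n a b := by
    ext ℓ m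
    simp only [Matrix.map_apply, coefMat, Matrix.of_apply, ← Polynomial.coeff_map,
      Polynomial.map_mul, Polynomial.map_prod, Polynomial.map_sub, Polynomial.map_X,
      Polynomial.map_C, hφA, hφB]
  calc (coefMat n a b).det = φ ((coefMat n A B).det) := by
        rw [RingHom.map_det, RingHom.mapMatrix_apply, hmap]
    _ = _ := by
        rw [h₀, map_prod]
        refine Finset.prod_congr rfl fun p _ => ?_
        rw [map_sub, hφA, hφB]

end aux

/-- Factor-exhaustion evaluation of `det P` used in Section 3 of the paper.
For `ℓ = 1, …, c` (here `ℓ.1 + 1` in 1-based terms), the monic polynomial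
`P_ℓ(z) = ∏_{i=1}^{ℓ-1} (z - a_i) · ∏_{j=1}^{c-ℓ} (z - b_j)` has degree `c - 1`,
and the determinant of the `c × c` matrix of coefficients (the `(ℓ, m)` entry being
the coefficient of `z^{m-1}` in `P_ℓ`) equals `∏_{i,j ≥ 1, i+j ≤ c} (a_i - b_j)`. -/
theorem det_coeff_matrix {R : Type*} [CommRing R] (c : ℕ) (hc : 1 ≤ c)
    (a b : Fin (c - 1) → R) :
    Matrix.det (Matrix.of fun ℓ m : Fin c =>
      ((∏ i ∈ Finset.univ.filter (fun i : Fin (c - 1) => i.1 < ℓ.1),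
          (X - C (a i))) *
        ∏ j ∈ Finset.univ.filter (fun j : Fin (c - 1) => j.1 < c - 1 - ℓ.1),
          (X - C (b j))).coeff m.1) =
    ∏ p ∈ Finset.univ.filter
        (fun p : Fin (c - 1) × Fin (c - 1) => p.1.1 + 1 + (p.2.1 + 1) ≤ c),
      (a p.1 - b p.2) := by
  obtain ⟨n, rfl⟩ : ∃ n, c = n + 1 := ⟨c - 1, by omega⟩
  exact key_generic n a b
end

section
/- Let a, b ≥ 1 and let α_1, …, α_{b+1}, β_1, …, β_{a+1}, γ_1, …, γ_{a+b} be complex numbers such that the α_i are pairwise distinct, α_i ≠ β_j for all i, j. Then the one-path propagator R_{a,b} satisfies the recurrence R_{a,b}(α_1,…,α_{b+1}; β_1,…,β_{a+1}; γ_1,…,γ_{a+b}) = ((α_{b+1} − γ_{a+b})/(α_{b+1} − β_a)) · R_{a−1,b}(α_1,…,α_{b+1}; β_1,…,β_a; γ_1,…,γ_{a+b−1}) + ((γ_{a+b} − β_{a+1})/(α_b − β_{a+1})) · R_{a,b−1}(α_1,…,α_b; β_1,…,β_{a+1}; γ_1,…,γ_{a+b−1}). (This is the recurrence Eq. (3.7)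 of the paper for the weighted single lattice path.) -/
/-- The residue form of the contour-integral formula Eq. (3.5) of the paper: the
one-path propagator `R_{a,b}(α; β; γ)` for the weighted enumeration of a single
non-intersecting lattice path. -/
noncomputable def pathR (a b : ℕ) (α : Fin (b + 1) → ℂ) (β : Fin (a + 1) → ℂ)
    (γ : Fin (a + b) → ℂ) : ℂ :=
  (α (Fin.last b) - β (Fin.last a)) *
    ∑ i : Fin (b + 1),
      (∏ k, (α i - γ k)) /
        ((∏ i' ∈ Finset.univ.erase i, (α i - α i')) * ∏ j, (α i - β j))

private lemma erase_castSucc_prod {n : ℕ} (g : Fin (n + 1) → ℂ) (i : Fin n) :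
    ∏ i' ∈ Finset.univ.erase i.castSucc, g i' =
      (∏ i' ∈ Finset.univ.erase i, g i'.castSucc) * g (Fin.last n) := by
  rw [Fin.univ_castSuccEmb, Finset.cons_eq_insert,
    Finset.erase_insert_of_ne (by simp [Fin.ext_iff]; omega),
    show i.castSucc = Fin.castSuccEmb i from rfl,
    ← Finset.map_erase, Finset.prod_insert (by simp [Fin.ext_iff]; omega),
    Finset.prod_map]
  rw [mul_comm]; rfl

private lemma erase_last_prod {n : ℕ} (g : Fin (n + 1) → ℂ) :
    ∏ i' ∈ Finset.univ.erase (Fin.last n), g i' = ∏ i' : Fin n, g i'.castSucc := by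
  rw [Fin.univ_castSuccEmb, Finset.cons_eq_insert,
    Finset.erase_insert (by simp [Finset.mem_map, Fin.ext_iff]; omega), Finset.prod_map]
  rfl

/-- The recurrence Eq. (3.7) of the paper for the weighted single lattice path, stated
for `a + 1, b + 1` in place of `a, b ≥ 1`.  Restrictions to initial segments of the
parameter families are expressed via `Fin.castLE`. -/
theorem pathR_recurrence (a b : ℕ)
    (α : Fin ((b + 1) + 1) → ℂ) (β : Fin ((a + 1) + 1) → ℂ)
    (γ : Fin ((a + 1) + (b + 1)) → ℂ)
    (hα : Function.Injective α) (hαβ : ∀ i j, α i ≠ β j) :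
    pathR (a + 1) (b + 1) α β γ =
      ((α (Fin.last (b + 1)) - γ ⟨a + b + 1, by omega⟩) /
          (α (Fin.last (b + 1)) - β ⟨a, by omega⟩)) *
        pathR a (b + 1) α (fun j => β (Fin.castLE (by omega) j))
          (fun k => γ (Fin.castLE (by omega) k)) +
      ((γ ⟨a + b + 1, by omega⟩ - β (Fin.last (a + 1))) /
          (α ⟨b, by omega⟩ - β (Fin.last (a + 1)))) *
        pathR (a + 1) b (fun i => α (Fin.castLE (by omega) i)) β
          (fun k => γ (Fin.castLE (by omega) k)) := by
  have hAβa : α (Fin.last (b+1)) - β ⟨a, by omega⟩ ≠ 0 := sub_ne_zero.mpr (hαβ _ _)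
  have hαbB : α ⟨b, by omega⟩ - β (Fin.last (a+1)) ≠ 0 := sub_ne_zero.mpr (hαβ _ _)
  have hcancel : ∀ (u v s : ℂ), v ≠ 0 → u / v * (v * s) = u * s := by
    intro u v s hv; field_simp
  -- product decompositions
  have hP0 : ∀ x : ℂ, ∏ k : Fin (a + 1 + (b + 1)), (x - γ k) =
      (∏ k : Fin (a + 1 + b), (x - γ (Fin.castLE (by omega) k))) * (x - γ ⟨a + b + 1, by omega⟩) := by
    intro x
    have hcast : ∏ k : Fin ((a + 1 + b) + 1),
        (x - γ (finCongr (show (a + 1 + b) + 1 = a + 1 + (b + 1) by omega) k)) =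
        ∏ k : Fin (a + 1 + (b + 1)), (x - γ k) :=
      Fintype.prod_equiv (finCongr (show (a + 1 + b) + 1 = a + 1 + (b + 1) by omega))
        (fun k => x - γ (finCongr (show (a + 1 + b) + 1 = a + 1 + (b + 1) by omega) k))
        (fun k => x - γ k) (fun _ => rfl)
    rw [← hcast, Fin.prod_univ_castSucc]
    exact congrArg₂ (· * ·) (Finset.prod_congr rfl fun _ _ => rfl)
      (congrArg (fun t => x - γ t) (Fin.ext (show a + 1 + b = a + b + 1 by omega)))
  have hSa : ∀ x : ℂ, ∏ j : Fin (a + 1 + 1), (x - β j) =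
      (∏ j : Fin (a + 1), (x - β (Fin.castLE (by omega) j))) * (x - β (Fin.last (a + 1))) := by
    intro x; rw [Fin.prod_univ_castSucc]; rfl
  have hγ1 : ∀ x : ℂ, ∏ k : Fin (a + (b + 1)), (x - γ (Fin.castLE (by omega) k)) =
      ∏ k : Fin (a + 1 + b), (x - γ (Fin.castLE (by omega) k)) := fun x =>
    Fintype.prod_equiv (finCongr (by omega)) _ _ (fun k => rfl)
  unfold pathR
  beta_reduce
  rw [show β (Fin.castLE (by omega : a+1 ≤ a+1+1) (Fin.last a)) = β ⟨a, by omega⟩ from rfl,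
      show α (Fin.castLE (by omega : b+1 ≤ b+1+1) (Fin.last b)) = α ⟨b, by omega⟩ from rfl]
  rw [hcancel _ _ _ hAβa, hcancel _ _ _ hαbB]
  conv_lhs => rw [Fin.sum_univ_castSucc]
  conv_rhs => rw [Fin.sum_univ_castSucc]
  rw [mul_add, mul_add, Finset.mul_sum, Finset.mul_sum, Finset.mul_sum]
  have hterm : ∀ i : Fin (b + 1),
      (α (Fin.last (b + 1)) - β (Fin.last (a + 1))) *
        ((∏ k : Fin (a + 1 + (b + 1)), (α i.castSucc - γ k)) /
          ((∏ i' ∈ Finset.univ.erase i.castSucc, (α i.castSucc - α i')) *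
            ∏ j : Fin (a + 1 + 1), (α i.castSucc - β j))) =
      (α (Fin.last (b + 1)) - γ ⟨a + b + 1, by omega⟩) *
        ((∏ k : Fin (a + (b + 1)), (α i.castSucc - γ (Fin.castLE (by omega) k))) /
          ((∏ i' ∈ Finset.univ.erase i.castSucc, (α i.castSucc - α i')) *
            ∏ j : Fin (a + 1), (α i.castSucc - β (Fin.castLE (by omega) j)))) +
      (γ ⟨a + b + 1, by omega⟩ - β (Fin.last (a + 1))) *
        ((∏ k : Fin (a + 1 + b), (α (Fin.castLE (by omega) i) - γ (Fin.castLE (by omega) k))) /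
          ((∏ i' ∈ Finset.univ.erase i, (α (Fin.castLE (by omega) i) - α (Fin.castLE (by omega) i'))) *
            ∏ j : Fin (a + 1 + 1), (α (Fin.castLE (by omega) i) - β j))) := by
    intro i
    have hcs : ∀ i' : Fin (b + 1), α (Fin.castLE (by omega : b+1 ≤ b+1+1) i') = α i'.castSucc :=
      fun _ => rfl
    simp only [hcs]
    rw [erase_castSucc_prod (fun i' => α i.castSucc - α i') i, hP0, hSa, hγ1]
    have hq : (∏ i' ∈ Finset.univ.erase i, (α i.castSucc - α i'.castSucc)) ≠ 0 :=
      Finset.prod_ne_zero_iff.mpr (fun i' hi' => sub_ne_zero.mpr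
        (fun h => (Finset.mem_erase.mp hi').1 (Fin.castSucc_injective _ (hα h)).symm))
    have hs : (∏ j : Fin (a + 1), (α i.castSucc - β (Fin.castLE (by omega) j))) ≠ 0 :=
      Finset.prod_ne_zero_iff.mpr (fun j _ => sub_ne_zero.mpr (hαβ _ _))
    have hxA : α i.castSucc - α (Fin.last (b + 1)) ≠ 0 :=
      sub_ne_zero.mpr (fun h => by
        have := hα h; simp [Fin.ext_iff, Fin.last] at this; omega)
    have hxB : α i.castSucc - β (Fin.last (a + 1)) ≠ 0 := sub_ne_zero.mpr (hαβ _ _)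
    field_simp
    ring
  have hlast :
      (α (Fin.last (b + 1)) - β (Fin.last (a + 1))) *
        ((∏ k : Fin (a + 1 + (b + 1)), (α (Fin.last (b + 1)) - γ k)) /
          ((∏ i' ∈ Finset.univ.erase (Fin.last (b + 1)), (α (Fin.last (b + 1)) - α i')) *
            ∏ j : Fin (a + 1 + 1), (α (Fin.last (b + 1)) - β j))) =
      (α (Fin.last (b + 1)) - γ ⟨a + b + 1, by omega⟩) *
        ((∏ k : Fin (a + (b + 1)), (α (Fin.last (b + 1)) - γ (Fin.castLE (by omega) k))) /
          ((∏ i' ∈ Finset.univ.erase (Fin.last (b + 1)), (α (Fin.last (b + 1)) - α i')) *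
            ∏ j : Fin (a + 1), (α (Fin.last (b + 1)) - β (Fin.castLE (by omega) j)))) := by
    rw [erase_last_prod (fun i' => α (Fin.last (b + 1)) - α i'), hP0, hSa, hγ1]
    have hq : (∏ i' : Fin (b + 1), (α (Fin.last (b + 1)) - α i'.castSucc)) ≠ 0 :=
      Finset.prod_ne_zero_iff.mpr (fun i' _ => sub_ne_zero.mpr
        (fun h => by have := hα h; simp [Fin.ext_iff, Fin.last] at this; omega))
    have hs : (∏ j : Fin (a + 1), (α (Fin.last (b + 1)) - β (Fin.castLE (by omega) j))) ≠ 0 :=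
      Finset.prod_ne_zero_iff.mpr (fun j _ => sub_ne_zero.mpr (hαβ _ _))
    have hAB : α (Fin.last (b + 1)) - β (Fin.last (a + 1)) ≠ 0 := sub_ne_zero.mpr (hαβ _ _)
    field_simp
  calc
    _ = (∑ i : Fin (b + 1),
          ((α (Fin.last (b + 1)) - γ ⟨a + b + 1, by omega⟩) *
            ((∏ k : Fin (a + (b + 1)), (α i.castSucc - γ (Fin.castLE (by omega) k))) /
              ((∏ i' ∈ Finset.univ.erase i.castSucc, (α i.castSucc - α i')) *
                ∏ j : Fin (a + 1), (α i.castSucc - β (Fin.castLE (by omega) j)))) +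
          (γ ⟨a + b + 1, by omega⟩ - β (Fin.last (a + 1))) *
            ((∏ k : Fin (a + 1 + b), (α (Fin.castLE (by omega) i) - γ (Fin.castLE (by omega) k))) /
              ((∏ i' ∈ Finset.univ.erase i, (α (Fin.castLE (by omega) i) - α (Fin.castLE (by omega) i'))) *
                ∏ j : Fin (a + 1 + 1), (α (Fin.castLE (by omega) i) - β j))))) +
        (α (Fin.last (b + 1)) - γ ⟨a + b + 1, by omega⟩) *
          ((∏ k : Fin (a + (b + 1)), (α (Fin.last (b + 1)) - γ (Fin.castLE (by omega) k))) /
            ((∏ i' ∈ Finset.univ.erase (Fin.last (b + 1)), (α (Fin.last (b + 1)) - α i')) *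
              ∏ j : Fin (a + 1), (α (Fin.last (b + 1)) - β (Fin.castLE (by omega) j)))) := by
        rw [hlast]
        exact congrArg (· + _) (Finset.sum_congr rfl fun i _ => hterm i)
    _ = _ := by rw [Finset.sum_add_distrib]; ring
end

section
/- Let a, b ≥ 0 and let α_1, …, α_{b+1}, β_1, …, β_{a+1}, γ_1, …, γ_{a+b} be complex numbers such that the α_i are pairwise distinct, and let R > 0 satisfy |α_i| < R for all i and |β_j| > R for all j. Then (α_{b+1} − β_{a+1}) · (1/(2πi)) ∮_{|z|=R} [ ∏_{k=1}^{a+b} (z − γ_k) ] / [ ∏_{i=1}^{b+1} (z − α_i) · ∏_{j=1}^{a+1} (z − β_j) ] dz = R_{a,b}(α; β; γ), where the contour is the circle of radius R traversed once counterclockwise. (This is Eq. (3.5) of the paper.) -/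
open Finset Metric Polynomial

open scoped Real

theorem inv_prod_sub_eq_sum_inv {K ι : Type*} [Field K] [Fintype ι] [DecidableEq ι] [Nonempty ι]
    {α : ι → K} (hα : Function.Injective α) {z : K} (hz : ∀ i, z ≠ α i) :
    (∏ i, (z - α i))⁻¹ = ∑ i, ((z - α i) * ∏ j ∈ univ.erase i, (α i - α j))⁻¹ := by
  have hlagrange : ∑ i, ∏ j ∈ univ.erase i, (α i - α j)⁻¹ * (z - α j) = 1 := by
    simpa [Lagrange.basis, Lagrange.basisDivisor, eval_finsetSum, eval_prod] using
      congrArg (eval z) (Lagrange.sum_basis hα.injOn univ_nonempty)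
  rw [← one_mul (∏ i, (z - α i))⁻¹, ← hlagrange, sum_mul]
  refine sum_congr rfl fun i _ => ?_
  rw [← mul_prod_erase univ (fun j => z - α j) (mem_univ i), prod_mul_distrib, prod_inv_distrib,
    mul_inv, mul_inv]
  have hrest : ∏ j ∈ univ.erase i, (z - α j) ≠ 0 := prod_ne_zero_iff.mpr fun j _ => sub_ne_zero.mpr (hz j)
  field_simp

theorem circleIntegral_div_prod_sub {ι : Type*} [Fintype ι] [DecidableEq ι] [Nonempty ι]
    {g : ℂ → ℂ} {c : ℂ} {R : ℝ} (hg : DifferentiableOn ℂ g (closedBall c R))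
    {α : ι → ℂ} (hα : Function.Injective α) (hαR : ∀ i, α i ∈ ball c R) :
    (∮ z in C(c, R), g z / ∏ i, (z - α i)) =
      2 * π * Complex.I * ∑ i, g (α i) / ∏ j ∈ univ.erase i, (α i - α j) := by
  have hR : 0 ≤ R := dist_nonneg.trans (mem_ball.mp (hαR (Classical.arbitrary ι))).le
  have hsphere : ∀ z ∈ sphere c R, ∀ i, z ≠ α i := fun z hz i h =>
    (mem_ball.mp (hαR i)).ne (h ▸ mem_sphere.mp hz)
  have hpartial : Set.EqOn (fun z => g z / ∏ i, (z - α i))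
      (fun z => ∑ i, (∏ j ∈ univ.erase i, (α i - α j))⁻¹ * ((z - α i)⁻¹ • g z))
      (sphere c R) := fun z hz => by
    simp only [div_eq_mul_inv, inv_prod_sub_eq_sum_inv hα (hsphere z hz), mul_sum, mul_inv,
      smul_eq_mul]
    exact sum_congr rfl fun i _ => by ring
  have hintegrable : ∀ i, CircleIntegrable
      (fun z => (∏ j ∈ univ.erase i, (α i - α j))⁻¹ * ((z - α i)⁻¹ • g z)) c R := fun i =>
    (continuousOn_const.mul ((((continuous_id.sub continuous_const).continuousOn).inv₀
      fun z hz => sub_ne_zero.mpr (hsphere z hz i)).smul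
        (hg.continuousOn.mono sphere_subset_closedBall))).circleIntegrable hR
  rw [circleIntegral.integral_congr hR hpartial,
    circleIntegral.integral_fun_sum fun i _ => hintegrable i, mul_sum]
  refine sum_congr rfl fun i _ => ?_
  rw [circleIntegral.integral_const_mul, hg.circleIntegral_sub_inv_smul (hαR i), smul_eq_mul]
  ring

theorem pathR_contour_integral_general (a b : ℕ)
    (α : Fin (b + 1) → ℂ) (β : Fin (a + 1) → ℂ) (γ : Fin (a + b) → ℂ)
    (hα : Function.Injective α) (R : ℝ)
    (hαR : ∀ i, ‖α i‖ < R) (hβR : ∀ j, R < ‖β j‖) :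
    (α (Fin.last b) - β (Fin.last a)) *
        ((2 * Real.pi * Complex.I)⁻¹ *
          ∮ z in C(0, R),
            (∏ k, (z - γ k)) / ((∏ i, (z - α i)) * ∏ j, (z - β j))) =
      pathR a b α β γ := by
  have hβ : ∀ z ∈ closedBall (0 : ℂ) R, ∏ j, (z - β j) ≠ 0 := fun z hz =>
    prod_ne_zero_iff.mpr fun j _ => sub_ne_zero.mpr fun h =>
      (mem_closedBall_zero_iff.mp hz).not_gt (h ▸ hβR j)
  have hg : DifferentiableOn ℂ (fun z => (∏ k, (z - γ k)) / ∏ j, (z - β j)) (closedBall 0 R) :=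
    DifferentiableOn.div (by fun_prop) (by fun_prop) hβ
  rw [pathR]
  simp_rw [div_mul_eq_div_div_swap]
  rw [circleIntegral_div_prod_sub hg hα fun i => mem_ball_zero_iff.mpr (hαR i),
    inv_mul_cancel_left₀ Complex.two_pi_I_ne_zero]

/-- Eq. (3.5) of the paper: the contour-integral formula for the one-path propagator.
The contour is the circle of radius `R` (traversed once counterclockwise) enclosing all
the poles `α_i` but none of the `β_j`. -/
theorem pathR_contour_integral (a b : ℕ)
    (α : Fin (b + 1) → ℂ) (β : Fin (a + 1) → ℂ) (γ : Fin (a + b) → ℂ)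
    (hα : Function.Injective α) (R : ℝ) (hR : 0 < R)
    (hαR : ∀ i, ‖α i‖ < R) (hβR : ∀ j, R < ‖β j‖) :
    (α (Fin.last b) - β (Fin.last a)) *
        ((2 * Real.pi * Complex.I)⁻¹ *
          ∮ z in C(0, R),
            (∏ k, (z - γ k)) / ((∏ i, (z - α i)) * ∏ j, (z - β j))) =
      pathR a b α β γ :=
  pathR_contour_integral_general a b α β γ hα R hαR hβR
end

section
/- Let k ≥ 0, let α_1, …, α_{k+1} be pairwise distinct complex numbers, let β_1, …, β_{k+1} be complex numbers, and let γ_1, γ_2 be complex numbers with γ_1 ≠ γ_2. Then Φ_{1,1,k}(α_1,…,α_{k+1}; β_1,…,β_{k+1}; γ_1, γ_2) = [ ∏_{i=1}^{k+1} (α_i − γ_1)(γ_2 − β_i) − ∏_{i=1}^{k+1} (α_i − γ_2)(γ_1 − β_i) ] / (γ_2 − γ_1). (This is the closed-form weighted enumeration of lozenge tilings of a k × 1 × 1 hexagon, Eq. (A.1) of the paper, with signs fixed by the explicit definition of Φ.) -/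
/-!
Write `E z = ∏ i, (α i - z)` and `M j z = ∏ i ≠ j, (α i - z)`. A `k`-subset of `k + 1` indices is
the complement of a single `j`, so `Φ_{1,1,k}` is `∑ j, f (α j) M j γ₁ M j γ₂ / M j (α j)` with
`f = ∏ l, (X - β l)`, and the theorem is the Bezout-type identity
`(y - x) ∑ j, f (α j) M j x M j y / M j (α j) = E x f y - f x E y`.
For `deg f ≤ k`, interpolate `f` at the nodes `α` and use
`E x M j y - M j x E y = (y - x) M j x M j y`, which holds since `E = (α j - ·) M j`. A multiple of the nodal polynomial, proportional to `E` and
zero at the nodes, changes neither side; this reduces `deg f = k + 1` to that case.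
-/

open Finset Polynomial

section Interpolation

variable {F ι : Type*} [Field F] [Fintype ι] [DecidableEq ι] {α : ι → F}

theorem eval_eq_sum_mul_prod_sub_div (hα : Function.Injective α) {f : F[X]}
    (hf : f.degree < Fintype.card ι) (y : F) :
    f.eval y = ∑ j, f.eval (α j) * (∏ i ∈ univ.erase j, (α i - y)) /
      ∏ i ∈ univ.erase j, (α i - α j) := by
  conv_lhs => rw [Lagrange.eq_interpolate (s := univ) hα.injOn hf]
  simp only [Lagrange.interpolate_apply, eval_finsetSum, eval_mul, eval_C, Lagrange.basis,
    eval_prod, Lagrange.basisDivisor, eval_X, eval_sub]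
  refine sum_congr rfl fun j _ => ?_
  rw [mul_div_assoc, ← prod_div_distrib]
  congr 1
  refine prod_congr rfl fun i _ => ?_
  rw [← neg_sub (α j), ← neg_sub y, neg_div_neg_eq, div_eq_inv_mul]

theorem sub_mul_sum_eq_bezout_of_degree_lt (hα : Function.Injective α) {f : F[X]}
    (hf : f.degree < Fintype.card ι) (x y : F) :
    (y - x) * ∑ j, f.eval (α j) * (∏ i ∈ univ.erase j, (α i - x) * (α i - y)) /
      ∏ i ∈ univ.erase j, (α i - α j) =
    (∏ i, (α i - x)) * f.eval y - f.eval x * ∏ i, (α i - y) := by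
  rw [eval_eq_sum_mul_prod_sub_div hα hf y, eval_eq_sum_mul_prod_sub_div hα hf x, mul_sum,
    mul_sum, sum_mul, ← sum_sub_distrib]
  refine sum_congr rfl fun j _ => ?_
  rw [← mul_prod_erase univ (fun i => α i - x) (mem_univ j),
    ← mul_prod_erase univ (fun i => α i - y) (mem_univ j), prod_mul_distrib]
  ring

theorem sub_mul_sum_eq_bezout (hα : Function.Injective α) {f : F[X]}
    (hf : f.natDegree ≤ Fintype.card ι) (x y : F) :
    (y - x) * ∑ j, f.eval (α j) * (∏ i ∈ univ.erase j, (α i - x) * (α i - y)) /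
      ∏ i ∈ univ.erase j, (α i - α j) =
    (∏ i, (α i - x)) * f.eval y - f.eval x * ∏ i, (α i - y) := by
  set n := Fintype.card ι
  set N := Lagrange.nodal univ α
  set g := f - C (f.coeff n) * N
  have hN : N.natDegree = n := by rw [Lagrange.natDegree_nodal, card_univ]
  have hg : g.degree < n := by
    rw [degree_lt_iff_coeff_zero]
    intro m hm
    rcases hm.lt_or_eq with hm | rfl
    · simp [g, coeff_eq_zero_of_natDegree_lt (hf.trans_lt hm),
        coeff_eq_zero_of_natDegree_lt (hN.trans_lt hm)]
    · have hNm : N.Monic := Lagrange.nodal_monic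
      simp [g, ← hN, hNm.leadingCoeff]
  have hfg : ∀ j, f.eval (α j) = g.eval (α j) := by
    simp [g, N, Lagrange.eval_nodal_at_node]
  have hE : ∀ z, ∏ i, (α i - z) = (-1) ^ n * N.eval z := by
    intro z
    rw [Lagrange.eval_nodal, show n = #(univ : Finset ι) from card_univ.symm, ← prod_neg]
    simp
  simp only [hfg]
  rw [sub_mul_sum_eq_bezout_of_degree_lt hα hg, hE x, hE y]
  simp only [g, eval_sub, eval_mul, eval_C]
  ring

end Interpolation

theorem Phi_one_eq_sum {a c : ℕ} (α : Fin (1 + c) → ℂ) (β : Fin (a + c) → ℂ)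
    (γ : Fin (a + 1) → ℂ) :
    Phi a 1 c α β γ = ∑ j, (∏ l, (α j - β l)) * (∏ i ∈ univ.erase j, ∏ m, (α i - γ m)) /
      ∏ i ∈ univ.erase j, (α i - α j) := by
  refine (sum_nbij (fun j => univ.erase j) ?_ ?_ ?_ ?_).symm
  · intro j _
    simp [mem_powersetCard, card_erase_of_mem]
  · intro j _ j' _ h
    simpa using congrArg (j ∉ ·) h
  · intro I hI
    have hcard : #Iᶜ = 1 := by
      rw [card_compl, (mem_powersetCard.1 hI).2, Fintype.card_fin]
      omega
    obtain ⟨j, hj⟩ := card_eq_one.1 hcard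
    exact ⟨j, mem_univ j, by simp only [← compl_singleton, ← hj, compl_compl]⟩
  · intro j _
    simp [← compl_singleton]

/-- The closed-form weighted enumeration of lozenge tilings of a `k × 1 × 1` hexagon,
Eq. (A.1) of the paper (with signs fixed by the explicit definition of `Phi`), i.e. the
case `a = b = 1`, `c = k` of `Φ_{a,b,c}` with two `γ`-parameters. -/
theorem Phi_hexagon_k11 (k : ℕ) (α β : Fin (1 + k) → ℂ) (γ₁ γ₂ : ℂ)
    (hα : Function.Injective α) (hγ : γ₁ ≠ γ₂) :
    Phi 1 1 k α β ![γ₁, γ₂] =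
      ((∏ i, (α i - γ₁) * (γ₂ - β i)) - ∏ i, (α i - γ₂) * (γ₁ - β i)) / (γ₂ - γ₁) := by
  have hf : (∏ l, (X - C (β l))).natDegree ≤ Fintype.card (Fin (1 + k)) := by simp
  have hbezout := sub_mul_sum_eq_bezout hα hf γ₁ γ₂
  simp only [eval_prod, eval_sub, eval_X, eval_C] at hbezout
  rw [eq_div_iff (sub_ne_zero.2 hγ.symm), prod_mul_distrib, prod_mul_distrib, mul_comm,
    Phi_one_eq_sum]
  simp only [Nat.reduceAdd, Fin.prod_univ_two, Matrix.cons_val_zero, Matrix.cons_val_one,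
    Matrix.cons_val_fin_one]
  linear_combination hbezout
end
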